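/- arXiv:1003.0228 — 3 statements merged into one kernel-verified Lean document; each statement's English description precedes it below -/
import Mathlib

section
/- Let 1/2 ≤ α < 1, 0 < ρ < 1/4 with ρ < α, and let G : [0,1] → ℝ^2 be the generalized Hilbert curve built on the overlapping squares F_n with expansion factor α and Cantor parametrization C_ρ (linearly interpolated off C_ρ). Then G is Hölder continuous with exponent log α / log ρ. -/
open Set

/-- Given the values `v0 = h(0)` and `v1 = h(1)`, the unique traversal-order function
(as in Definition 2.1) with these values: `h(2) = -h(0)`, `h(3) = -h(1)`. -/
def hilbertOrder (v0 v1 : ℝ × ℝ) : Fin 4 → ℝ × ℝ := ![v0, v1, -v0, -v1]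

/-- The traversal functions `f_{a_1 … a_n}` of the standard Hilbert algorithm, recursing
on the string read backwards (head = last digit `a_n`). -/
def travRev : List (Fin 4) → Fin 4 → ℝ × ℝ
  | [] => hilbertOrder (-1, -1) (-1, 1)
  | a :: w =>
    let f := travRev w
    if a = 0 then hilbertOrder (f 0) (f 3)
    else if a = 3 then hilbertOrder (f 2) (f 1)
    else f

/-- The traversal function `f_{a_1 … a_n}` associated to the string `a_1 … a_n`. -/
def trav (w : List (Fin 4)) : Fin 4 → ℝ × ℝ := travRev w.reverse

/-- The limit value `G(t)` of the generalized Hilbert curve at the point of the Cantor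
set with digit sequence `a` (so `a 0 = a_1`, etc.). -/
noncomputable def GHlim (α : ℝ) (a : ℕ → Fin 4) : ℝ × ℝ :=
  (1 / 2, 1 / 2) + ∑' k : ℕ, (α ^ k / 4) • trav (List.ofFn fun i : Fin k => a i) (a k)

/-- The point of the Cantor set `C_ρ` with digit sequence `a`. -/
noncomputable def cantorPt (ρ : ℝ) (a : ℕ → Fin 4) : ℝ :=
  ((1 - ρ) / (3 * ρ)) * ∑' n : ℕ, (a n : ℝ) * ρ ^ (n + 1)

/-!
If two digit sequences first differ at index `n`, the corresponding points of `C_ρ` are at least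
`(1 - 4ρ)/3 · ρ ^ n` apart (the leading digit outweighs the geometric tail since `ρ < 1/4`), while
their images under `G` are at most `α ^ n / (2(1 - α))` apart. As `(ρ ^ n) ^ θ = α ^ n` for
`θ = logb ρ α = log α / log ρ`, `G` is `θ`-Hölder on `C_ρ`. On each gap of `C_ρ` the curve is
affine, and an affine map is `θ`-Hölder on a segment (`θ ≤ 1` because `ρ < α`) as soon as its
endpoint values are. Two arbitrary parameters are joined through at most two gaps and one
stretch between points of `C_ρ`, which costs a factor `3`.
-/

section AffineOnGaps

variable {E : Type*} [NormedAddCommGroup E] [NormedSpace ℝ E]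

theorem norm_sub_le_of_affine_on_Icc {G : ℝ → E} {p q C θ : ℝ} (hpq : p < q) (hθ0 : 0 ≤ θ)
    (hθ1 : θ ≤ 1)
    (hG : ∀ u ∈ Icc p q, G u = G p + ((u - p) / (q - p)) • (G q - G p))
    (hend : ‖G q - G p‖ ≤ C * (q - p) ^ θ) {u v : ℝ} (hu : u ∈ Icc p q) (hv : v ∈ Icc p q) :
    ‖G u - G v‖ ≤ C * |u - v| ^ θ := by
  have hqp : 0 < q - p := sub_pos.2 hpq
  set r := |u - v| / (q - p)
  have hr0 : 0 ≤ r := by positivity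
  have hr1 : r ≤ 1 :=
    (div_le_one hqp).2 (abs_sub_le_iff.2 ⟨by linarith [hu.2, hv.1], by linarith [hu.1, hv.2]⟩)
  have hdiff : G u - G v = ((u - v) / (q - p)) • (G q - G p) := by
    rw [hG u hu, hG v hv, add_sub_add_left_eq_sub, ← sub_smul, div_sub_div_same,
      sub_sub_sub_cancel_right]
  calc ‖G u - G v‖ = r * ‖G q - G p‖ := by
        rw [hdiff, norm_smul, Real.norm_eq_abs, abs_div, abs_of_pos hqp]
    _ ≤ r ^ θ * (C * (q - p) ^ θ) := by
        gcongr
        simpa using Real.rpow_le_rpow_of_exponent_ge' hr0 hr1 hθ0 hθ1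
    _ = C * (r * (q - p)) ^ θ := by rw [Real.mul_rpow hr0 hqp.le]; ring
    _ = C * |u - v| ^ θ := by rw [div_mul_cancel₀ _ hqp.ne']

theorem exists_gap_of_mem_Icc {K : Set ℝ} (hK : IsClosed K) {a b x : ℝ} (ha : a ∈ K) (hb : b ∈ K)
    (hx : x ∈ Icc a b) :
    ∃ p ∈ K, ∃ q ∈ K, a ≤ p ∧ p ≤ x ∧ x ≤ q ∧ q ≤ b ∧ Ioo p q ∩ K = ∅ := by
  have hA : (K ∩ Icc a x).Nonempty := ⟨a, ha, le_rfl, hx.1⟩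
  have hB : (K ∩ Icc x b).Nonempty := ⟨b, hb, hx.2, le_rfl⟩
  have hAbdd : BddAbove (K ∩ Icc a x) := bddAbove_Icc.mono inter_subset_right
  have hBbdd : BddBelow (K ∩ Icc x b) := bddBelow_Icc.mono inter_subset_right
  obtain ⟨hpK, hap, hpx⟩ := (hK.inter isClosed_Icc).csSup_mem hA hAbdd
  obtain ⟨hqK, hxq, hqb⟩ := (hK.inter isClosed_Icc).csInf_mem hB hBbdd
  refine ⟨_, hpK, _, hqK, hap, hpx, hxq, hqb, eq_empty_of_forall_notMem ?_⟩
  rintro c ⟨⟨hpc, hcq⟩, hcK⟩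
  rcases le_total c x with hcx | hxc
  · exact (le_csSup hAbdd ⟨hcK, hap.trans hpc.le, hcx⟩).not_gt hpc
  · exact (csInf_le hBbdd ⟨hcK, hxc, hcq.le.trans hqb⟩).not_gt hcq

theorem norm_sub_le_on_gap {K : Set ℝ} {G : ℝ → E} {a b C θ : ℝ} (hθ0 : 0 ≤ θ) (hθ1 : θ ≤ 1)
    (hGK : ∀ x ∈ K, ∀ y ∈ K, ‖G x - G y‖ ≤ C * |x - y| ^ θ)
    (hGlin : ∀ s t : ℝ, a ≤ s → s < t → t ≤ b → Ioo s t ∩ K = ∅ →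
      ∀ u ∈ Icc s t, G u = G s + ((u - s) / (t - s)) • (G t - G s))
    {p q : ℝ} (hp : p ∈ K) (hq : q ∈ K) (hap : a ≤ p) (hqb : q ≤ b) (hgap : Ioo p q ∩ K = ∅)
    ⦃u v : ℝ⦄ (hu : u ∈ Icc p q) (hv : v ∈ Icc p q) :
    ‖G u - G v‖ ≤ C * |u - v| ^ θ := by
  rcases (hu.1.trans hu.2).eq_or_lt with hpq | hpq
  · have hup : u = p := by linarith [hu.1, hu.2]
    have hvp : v = p := by linarith [hv.1, hv.2]
    rw [hup, hvp]
    exact hGK p hp p hp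
  · have hend := hGK q hq p hp
    rw [abs_of_pos (sub_pos.2 hpq)] at hend
    exact norm_sub_le_of_affine_on_Icc hpq hθ0 hθ1 (hGlin p q hap hpq hqb hgap) hend hu hv

theorem norm_sub_le_of_affine_on_gaps {K : Set ℝ} (hK : IsClosed K) {G : ℝ → E} {a b C θ : ℝ}
    (ha : a ∈ K) (hb : b ∈ K) (hC : 0 ≤ C) (hθ0 : 0 ≤ θ) (hθ1 : θ ≤ 1)
    (hGK : ∀ x ∈ K, ∀ y ∈ K, ‖G x - G y‖ ≤ C * |x - y| ^ θ)
    (hGlin : ∀ s t : ℝ, a ≤ s → s < t → t ≤ b → Ioo s t ∩ K = ∅ →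
      ∀ u ∈ Icc s t, G u = G s + ((u - s) / (t - s)) • (G t - G s))
    {s t : ℝ} (hs : s ∈ Icc a b) (ht : t ∈ Icc a b) :
    ‖G s - G t‖ ≤ 3 * C * |s - t| ^ θ := by
  wlog hst : s ≤ t generalizing s t
  · rw [norm_sub_rev, abs_sub_comm]
    exact this ht hs (le_of_not_ge hst)
  obtain ⟨p, hp, q, hq, hap, hps, hsq, hqb, hgap⟩ := exists_gap_of_mem_Icc hK ha hb hs
  have hmono : ∀ x ∈ Icc s t, ∀ y ∈ Icc s t, C * |x - y| ^ θ ≤ C * |s - t| ^ θ := by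
    intro x hx y hy
    have hxy : |x - y| ≤ |s - t| := by
      rw [abs_sub_comm s t, abs_of_nonneg (sub_nonneg.2 hst), abs_sub_le_iff]
      constructor <;> linarith [hx.1, hx.2, hy.1, hy.2]
    gcongr
  obtain ⟨p', hp', q', hq', hap', hp't, htq', hq'b, hgap'⟩ := exists_gap_of_mem_Icc hK ha hb ht
  have hGs := norm_sub_le_on_gap hθ0 hθ1 hGK hGlin hp hq hap hqb hgap
  have hGt := norm_sub_le_on_gap hθ0 hθ1 hGK hGlin hp' hq' hap' hq'b hgap'
  rcases le_or_gt t q with htq | hqt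
  · have hCnn : 0 ≤ C * |s - t| ^ θ := by positivity
    exact (hGs ⟨hps, hsq⟩ ⟨hps.trans hst, htq⟩).trans (by linarith)
  · have hqp' : q ≤ p' := not_lt.1 fun hp'q =>
      (eq_empty_iff_forall_notMem.1 hgap') q ⟨⟨hp'q, hqt.trans_le htq'⟩, hq⟩
    have hq_mem : q ∈ Icc s t := ⟨hsq, hqt.le⟩
    have hp'_mem : p' ∈ Icc s t := ⟨hsq.trans hqp', hp't⟩
    calc ‖G s - G t‖ ≤ ‖G s - G q‖ + ‖G q - G p'‖ + ‖G p' - G t‖ := by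
          linarith [norm_sub_le_norm_sub_add_norm_sub (G s) (G p') (G t),
            norm_sub_le_norm_sub_add_norm_sub (G s) (G q) (G p')]
      _ ≤ C * |s - q| ^ θ + C * |q - p'| ^ θ + C * |p' - t| ^ θ := by
          gcongr
          · exact hGs ⟨hps, hsq⟩ ⟨hps.trans hsq, le_rfl⟩
          · exact hGK q hq p' hp'
          · exact hGt ⟨le_rfl, hp't.trans htq'⟩ ⟨hp't, htq'⟩
      _ ≤ 3 * C * |s - t| ^ θ := by
          linarith [hmono s ⟨le_rfl, hst⟩ q hq_mem, hmono q hq_mem p' hp'_mem,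
            hmono p' hp'_mem t ⟨hst, le_rfl⟩]

end AffineOnGaps

theorem norm_tsum_le_of_eq_zero_of_le_geometric {E : Type*} [NormedAddCommGroup E] [CompleteSpace E]
    {w : ℕ → E} {c r : ℝ} {n : ℕ} (hr0 : 0 ≤ r) (hr1 : r < 1) (hzero : ∀ k < n, w k = 0)
    (hle : ∀ k, ‖w k‖ ≤ c * r ^ k) :
    ‖∑' k, w k‖ ≤ c * r ^ n / (1 - r) := by
  have hw : Summable w :=
    .of_norm_bounded ((summable_geometric_of_lt_one hr0 hr1).mul_left c) hle
  have htail : HasSum (fun k => c * r ^ n * r ^ k) (c * r ^ n / (1 - r)) := by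
    simpa only [div_eq_mul_inv] using (hasSum_geometric_of_lt_one hr0 hr1).mul_left (c * r ^ n)
  rw [← hw.sum_add_tsum_nat_add n, Finset.sum_eq_zero fun k hk => hzero k (Finset.mem_range.1 hk),
    zero_add]
  refine tsum_of_norm_bounded htail fun k => ?_
  simpa only [pow_add, mul_comm, mul_left_comm, mul_assoc] using hle (k + n)

theorem natCast_fin_le_three (x : Fin 4) : (x : ℝ) ≤ 3 := by
  exact_mod_cast Nat.le_of_lt_succ x.isLt

theorem abs_natCast_fin_sub_le_three (x y : Fin 4) : |(x : ℝ) - y| ≤ 3 := by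
  have hx : (0 : ℝ) ≤ x := Nat.cast_nonneg _
  have hy : (0 : ℝ) ≤ y := Nat.cast_nonneg _
  rw [abs_sub_le_iff]
  constructor <;> linarith [natCast_fin_le_three x, natCast_fin_le_three y]

theorem natCast_fin_mul_pow_succ_le {ρ : ℝ} (hρ0 : 0 ≤ ρ) (x : Fin 4) (k : ℕ) :
    (x : ℝ) * ρ ^ (k + 1) ≤ 3 * ρ * ρ ^ k :=
  calc (x : ℝ) * ρ ^ (k + 1) ≤ 3 * ρ ^ (k + 1) := by gcongr; exact natCast_fin_le_three x
    _ = 3 * ρ * ρ ^ k := by ring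

theorem one_le_abs_natCast_sub_natCast {m k : ℕ} (h : m ≠ k) : 1 ≤ |(m : ℝ) - k| := by
  have := Int.one_le_abs (sub_ne_zero.2 (Int.natCast_inj.not.2 h))
  exact_mod_cast this

theorem le_abs_tsum_digits {ρ : ℝ} (hρ0 : 0 ≤ ρ) (hρ1 : ρ < 1) {d : ℕ → ℝ} {n : ℕ}
    (hd : ∀ k, |d k| ≤ 3) (hzero : ∀ k < n, d k = 0) (hn : 1 ≤ |d n|) :
    ρ ^ (n + 1) - 3 * ρ * ρ ^ (n + 1) / (1 - ρ) ≤ |∑' k, d k * ρ ^ (k + 1)| := by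
  have hbound : ∀ k, ‖d k * ρ ^ (k + 1)‖ ≤ 3 * ρ * ρ ^ k := fun k => by
    rw [Real.norm_eq_abs, abs_mul, abs_of_nonneg (pow_nonneg hρ0 _)]
    calc |d k| * ρ ^ (k + 1) ≤ 3 * ρ ^ (k + 1) := by gcongr; exact hd k
      _ = 3 * ρ * ρ ^ k := by ring
  have hs : Summable fun k => d k * ρ ^ (k + 1) :=
    .of_norm_bounded ((summable_geometric_of_lt_one hρ0 hρ1).mul_left _) hbound
  set tail := ∑' k, if k = n then 0 else d k * ρ ^ (k + 1)
  have htail : ‖tail‖ ≤ 3 * ρ * ρ ^ (n + 1) / (1 - ρ) := by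
    refine norm_tsum_le_of_eq_zero_of_le_geometric hρ0 hρ1 (fun k hk => ?_) (fun k => ?_)
    · rcases (Nat.lt_succ_iff.1 hk).lt_or_eq with hkn | rfl
      · simp [hkn.ne, hzero k hkn]
      · simp
    · split_ifs
      · simp only [norm_zero]; positivity
      · exact hbound k
  have hlead : ρ ^ (n + 1) ≤ |d n * ρ ^ (n + 1)| := by
    rw [abs_mul, abs_of_nonneg (pow_nonneg hρ0 _)]
    exact le_mul_of_one_le_left (pow_nonneg hρ0 _) hn
  rw [Real.norm_eq_abs] at htail
  rw [hs.tsum_eq_add_tsum_ite n]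
  linarith [abs_sub_abs_le_abs_add (d n * ρ ^ (n + 1)) tail]

theorem summable_digits {ρ : ℝ} (hρ0 : 0 ≤ ρ) (hρ1 : ρ < 1) (a : ℕ → Fin 4) :
    Summable fun k => (a k : ℝ) * ρ ^ (k + 1) :=
  .of_nonneg_of_le (fun k => by positivity) (fun k => natCast_fin_mul_pow_succ_le hρ0 (a k) k)
    ((summable_geometric_of_lt_one hρ0 hρ1).mul_left (3 * ρ))

theorem cantorPt_sub_ge {ρ : ℝ} (hρ0 : 0 < ρ) (hρ1 : ρ < 1) {a b : ℕ → Fin 4} {n : ℕ}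
    (hab : ∀ k < n, a k = b k) (hn : a n ≠ b n) :
    (1 - 4 * ρ) / 3 * ρ ^ n ≤ |cantorPt ρ a - cantorPt ρ b| := by
  have hc : 0 < (1 - ρ) / (3 * ρ) := div_pos (by linarith) (by linarith)
  have hdigits := le_abs_tsum_digits (d := fun k => (a k : ℝ) - b k) hρ0.le hρ1
    (fun k => abs_natCast_fin_sub_le_three (a k) (b k))
    (fun k hk => by simp [hab k hk])
    (one_le_abs_natCast_sub_natCast (Fin.val_ne_of_ne hn))
  rw [cantorPt, cantorPt, ← mul_sub, ← (summable_digits hρ0.le hρ1 a).tsum_sub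
    (summable_digits hρ0.le hρ1 b), abs_mul, abs_of_pos hc]
  simp_rw [← sub_mul]
  calc (1 - 4 * ρ) / 3 * ρ ^ n
      = (1 - ρ) / (3 * ρ) * (ρ ^ (n + 1) - 3 * ρ * ρ ^ (n + 1) / (1 - ρ)) := by
        field_simp [(by linarith : 1 - ρ ≠ 0)]
        ring
    _ ≤ _ := by gcongr

theorem continuous_cantorPt {ρ : ℝ} (hρ0 : 0 ≤ ρ) (hρ1 : ρ < 1) : Continuous (cantorPt ρ) := by
  refine continuous_const.mul (continuous_tsum (u := fun k => 3 * ρ * ρ ^ k) (fun k => by fun_prop)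
    ((summable_geometric_of_lt_one hρ0 hρ1).mul_left _) fun k a => ?_)
  rw [Real.norm_eq_abs, abs_of_nonneg (by positivity)]
  exact natCast_fin_mul_pow_succ_le hρ0 (a k) k

theorem isClosed_range_cantorPt {ρ : ℝ} (hρ0 : 0 ≤ ρ) (hρ1 : ρ < 1) :
    IsClosed (range (cantorPt ρ)) :=
  (isCompact_range (continuous_cantorPt hρ0 hρ1)).isClosed

theorem cantorPt_zero (ρ : ℝ) : cantorPt ρ 0 = 0 := by
  simp [cantorPt]

theorem cantorPt_three {ρ : ℝ} (hρ0 : 0 < ρ) (hρ1 : ρ < 1) : cantorPt ρ (fun _ => 3) = 1 := by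
  have h3 : (((3 : Fin 4) : ℕ) : ℝ) = 3 := by norm_num
  simp_rw [cantorPt, h3, pow_succ, mul_comm _ ρ, ← mul_assoc, tsum_mul_left,
    tsum_geometric_of_lt_one hρ0.le hρ1]
  field_simp [(by linarith : 1 - ρ ≠ 0)]

theorem norm_travRev_le_one (w : List (Fin 4)) (i : Fin 4) : ‖travRev w i‖ ≤ 1 := by
  induction w generalizing i with
  | nil => fin_cases i <;> simp [travRev, hilbertOrder]
  | cons a w ih =>
    have hord : ∀ j j' : Fin 4, ‖hilbertOrder (travRev w j) (travRev w j') i‖ ≤ 1 := fun j j' => by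
      fin_cases i <;> simp [hilbertOrder, ih]
    simp only [travRev]
    split_ifs
    exacts [hord 0 3, hord 2 1, ih i]

/-- The increment `G_{k+1} - G_k = (α ^ k / 4) • f_{a_1 … a_k}(a_{k+1})`. -/
noncomputable def hilbertIncr (α : ℝ) (a : ℕ → Fin 4) (k : ℕ) : ℝ × ℝ :=
  (α ^ k / 4) • trav (List.ofFn fun i : Fin k => a i) (a k)

theorem norm_hilbertIncr_le {α : ℝ} (hα0 : 0 ≤ α) (a : ℕ → Fin 4) (k : ℕ) :
    ‖hilbertIncr α a k‖ ≤ 1 / 4 * α ^ k := by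
  rw [hilbertIncr, norm_smul, Real.norm_eq_abs, abs_of_nonneg (by positivity)]
  calc α ^ k / 4 * ‖trav _ (a k)‖ ≤ α ^ k / 4 * 1 := by gcongr; exact norm_travRev_le_one _ _
    _ = 1 / 4 * α ^ k := by ring

theorem hilbertIncr_congr {α : ℝ} {a b : ℕ → Fin 4} {k : ℕ} (hab : ∀ i ≤ k, a i = b i) :
    hilbertIncr α a k = hilbertIncr α b k := by
  have hpre : (List.ofFn fun i : Fin k => a i) = List.ofFn fun i : Fin k => b i :=
    congrArg List.ofFn (funext fun i => hab i i.isLt.le)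
  rw [hilbertIncr, hilbertIncr, hpre, hab k le_rfl]

theorem summable_hilbertIncr {α : ℝ} (hα0 : 0 ≤ α) (hα1 : α < 1) (a : ℕ → Fin 4) :
    Summable (hilbertIncr α a) :=
  .of_norm_bounded ((summable_geometric_of_lt_one hα0 hα1).mul_left _) (norm_hilbertIncr_le hα0 a)

theorem norm_GHlim_sub_le {α : ℝ} (hα0 : 0 ≤ α) (hα1 : α < 1) {a b : ℕ → Fin 4} {n : ℕ}
    (hab : ∀ k < n, a k = b k) :
    ‖GHlim α a - GHlim α b‖ ≤ α ^ n / (2 * (1 - α)) := by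
  have hdiff : GHlim α a - GHlim α b = ∑' k, (hilbertIncr α a k - hilbertIncr α b k) := by
    rw [GHlim, GHlim, add_sub_add_left_eq_sub,
      (summable_hilbertIncr hα0 hα1 a).tsum_sub (summable_hilbertIncr hα0 hα1 b)]
    rfl
  have hbound := norm_tsum_le_of_eq_zero_of_le_geometric
    (w := fun k => hilbertIncr α a k - hilbertIncr α b k) (c := 1 / 2) hα0 hα1
    (fun k hk => sub_eq_zero.2 (hilbertIncr_congr fun i hi => hab i (hi.trans_lt hk)))
    fun k => (norm_sub_le _ _).trans
      (by linarith [norm_hilbertIncr_le hα0 a k, norm_hilbertIncr_le hα0 b k])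
  rw [hdiff, mul_comm, ← div_div]
  exact hbound.trans_eq (by ring)

theorem norm_GHlim_sub_le_rpow {α ρ : ℝ} (hα0 : 0 < α) (hα1 : α < 1) (hρ0 : 0 < ρ)
    (hρ1 : ρ < 1 / 4) (a b : ℕ → Fin 4) :
    ‖GHlim α a - GHlim α b‖ ≤ 1 / (2 * (1 - α)) / ((1 - 4 * ρ) / 3) ^ Real.logb ρ α *
      |cantorPt ρ a - cantorPt ρ b| ^ Real.logb ρ α := by
  set θ := Real.logb ρ α
  have hθ : 0 ≤ θ := Real.logb_nonneg_of_base_lt_one hρ0 (by linarith) hα0 hα1.le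
  have hc : 0 < (1 - 4 * ρ) / 3 := by linarith
  obtain rfl | hne := eq_or_ne a b
  · simp only [sub_self, norm_zero]
    positivity
  have hex : ∃ n, a n ≠ b n := Function.ne_iff.1 hne
  set n := Nat.find hex
  have hagree : ∀ k < n, a k = b k := fun k hk => not_not.1 (Nat.find_min hex hk)
  have hsep := cantorPt_sub_ge hρ0 (by linarith) hagree (Nat.find_spec hex)
  have hpow : α ^ n = (ρ ^ n) ^ θ := by
    rw [← Real.rpow_pow_comm hρ0.le, Real.rpow_logb hρ0 (by linarith) hα0]
  calc ‖GHlim α a - GHlim α b‖ ≤ α ^ n / (2 * (1 - α)) := norm_GHlim_sub_le hα0.le hα1 hagree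
    _ = 1 / (2 * (1 - α)) * (ρ ^ n) ^ θ := by rw [← hpow]; ring
    _ ≤ 1 / (2 * (1 - α)) * (|cantorPt ρ a - cantorPt ρ b| / ((1 - 4 * ρ) / 3)) ^ θ := by
        gcongr
        rwa [le_div_iff₀' hc]
    _ = _ := by rw [Real.div_rpow (abs_nonneg _) hc.le]; ring

theorem stmt12_general (α ρ : ℝ) (hα2 : α < 1) (hρ0 : 0 < ρ)
    (hρ1 : ρ < 1 / 4) (hρα : ρ < α)
    (G : ℝ → ℝ × ℝ)
    (hGval : ∀ a : ℕ → Fin 4, G (cantorPt ρ a) = GHlim α a)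
    (hGlin : ∀ s t : ℝ, 0 ≤ s → s < t → t ≤ 1 →
      Ioo s t ∩ Set.range (cantorPt ρ) = ∅ →
      ∀ u ∈ Icc s t, G u = G s + ((u - s) / (t - s)) • (G t - G s)) :
    ∃ C : ℝ, 0 < C ∧ ∀ s ∈ Icc (0:ℝ) 1, ∀ t ∈ Icc (0:ℝ) 1,
      ‖G s - G t‖ ≤ C * |s - t| ^ (Real.log α / Real.log ρ) := by
  have hα0 : 0 < α := hρ0.trans hρα
  have hρ1' : ρ < 1 := by linarith
  have hθ0 : 0 ≤ Real.logb ρ α := Real.logb_nonneg_of_base_lt_one hρ0 hρ1' hα0 hα2.le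
  have hθ1 : Real.logb ρ α ≤ 1 := by
    rw [← Real.logb_self_eq_one_iff.2 ⟨hρ0.ne', hρ1'.ne, by linarith⟩]
    exact (Real.logb_le_logb_of_base_lt_one hρ0 hρ1' hα0 hρ0).2 hρα.le
  set C := 1 / (2 * (1 - α)) / ((1 - 4 * ρ) / 3) ^ Real.logb ρ α
  have hC : 0 < C := by
    have : 0 < 1 - α := by linarith
    have : 0 < 1 - 4 * ρ := by linarith
    positivity
  have hGK : ∀ x ∈ range (cantorPt ρ), ∀ y ∈ range (cantorPt ρ),
      ‖G x - G y‖ ≤ C * |x - y| ^ Real.logb ρ α := by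
    rintro _ ⟨a, rfl⟩ _ ⟨b, rfl⟩
    rw [hGval, hGval]
    exact norm_GHlim_sub_le_rpow hα0 hα2 hρ0 hρ1 a b
  refine ⟨3 * C, by positivity, fun s hs t ht => ?_⟩
  rw [Real.log_div_log]
  exact norm_sub_le_of_affine_on_gaps (isClosed_range_cantorPt hρ0.le hρ1')
    ⟨0, cantorPt_zero ρ⟩ ⟨_, cantorPt_three hρ0 hρ1'⟩ hC.le hθ0 hθ1 hGK hGlin hs ht

/-- The generalized Hilbert curve `G` (the continuous function with the prescribed
values on `C_ρ`, linearly interpolated over the connection intervals) is Hölder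
continuous with exponent `log α / log ρ`. -/
theorem stmt12 (α ρ : ℝ) (hα1 : 1 / 2 ≤ α) (hα2 : α < 1) (hρ0 : 0 < ρ)
    (hρ1 : ρ < 1 / 4) (hρα : ρ < α)
    (G : ℝ → ℝ × ℝ) (hGcont : ContinuousOn G (Icc 0 1))
    (hGval : ∀ a : ℕ → Fin 4, G (cantorPt ρ a) = GHlim α a)
    (hGlin : ∀ s t : ℝ, 0 ≤ s → s < t → t ≤ 1 →
      Ioo s t ∩ Set.range (cantorPt ρ) = ∅ →
      ∀ u ∈ Icc s t, G u = G s + ((u - s) / (t - s)) • (G t - G s)) :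
    ∃ C : ℝ, 0 < C ∧ ∀ s ∈ Icc (0:ℝ) 1, ∀ t ∈ Icc (0:ℝ) 1,
      ‖G s - G t‖ ≤ C * |s - t| ^ (Real.log α / Real.log ρ) :=
  stmt12_general α ρ hα2 hρ0 hρ1 hρα G hGval hGlin
end

section
/- Let G be the generalized planar Hilbert curve with parameters α > 1/2 and ρ < 1/4, and let h : [0,1] → ℝ^2 satisfy |h(t+s) − h(t)| ≤ C√(s log(1/s)) for all sufficiently small s > 0 and 0 ≤ t ≤ 1 − s. Then the range of G + h contains a nonempty open subset of ℝ^2. -/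
open Set

/-!
Fix a word `w₀` of length `N` and a point `p` within `α ^ N / 2` (sup norm) of
`x(w₀) + h(τ(w₀))`, where `x` and `τ` are the partial sums of the curve and of the Cantor
parametrization. Extend the word greedily: at level `k` all four corners `(±1, ±1)` are values
of the traversal function, so the next digit moves `x` by `α ^ k / 4` towards the corner nearest
to the residual `p - h(τ) - x`, cutting its norm from `α ^ k / 2` to `α ^ k / 4`. Meanwhile `τ`
moves by at most `ρ ^ k`, so `h` moves by at most `C √(ρ ^ k · k log (1/ρ)) = o(α ^ k)` because
`ρ < 1/4 < α ^ 2`; once `N` is large this is at most `(2α - 1)/4 · α ^ k`, and the residual stays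
below `α ^ (k+1) / 2`. In the limit it vanishes, so `p = G(t) + h(t)` at the Cantor point `t`
with these digits.
-/

open Filter Topology

lemma travRev_eq_hilbertOrder (w : List (Fin 4)) :
    ∃ s t : ℝ, (s = 1 ∨ s = -1) ∧ (t = 1 ∨ t = -1) ∧ travRev w = hilbertOrder (s, s) (-t, t) := by
  induction w with
  | nil => exact ⟨-1, 1, Or.inr rfl, Or.inl rfl, by simp [travRev]⟩
  | cons a w ih =>
    obtain ⟨s, t, hs, ht, hw⟩ := ih
    by_cases h0 : a = 0
    · refine ⟨s, -t, hs, ?_, ?_⟩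
      · rcases ht with rfl | rfl <;> norm_num
      · simp [travRev, h0, hw, hilbertOrder]
    by_cases h3 : a = 3
    · refine ⟨-s, t, ?_, ht, ?_⟩
      · rcases hs with rfl | rfl <;> norm_num
      · simp [travRev, h3, hw, hilbertOrder]
    · exact ⟨s, t, hs, ht, by simp [travRev, h0, h3, hw]⟩

lemma range_travRev (w : List (Fin 4)) :
    Set.range (travRev w) = {e : ℝ × ℝ | |e.1| = 1 ∧ |e.2| = 1} := by
  obtain ⟨s, t, hs, ht, hw⟩ := travRev_eq_hilbertOrder w
  rw [hw]
  refine Set.Subset.antisymm ?_ ?_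
  · rintro _ ⟨a, rfl⟩
    rcases hs with rfl | rfl <;> rcases ht with rfl | rfl <;> fin_cases a <;> simp [hilbertOrder]
  · rintro ⟨e₁, e₂⟩ ⟨h₁, h₂⟩
    rcases abs_eq (zero_le_one' ℝ) |>.1 h₁ with rfl | rfl <;>
      rcases abs_eq (zero_le_one' ℝ) |>.1 h₂ with rfl | rfl <;>
      rcases hs with rfl | rfl <;> rcases ht with rfl | rfl <;> simp [hilbertOrder]

lemma norm_travRev (w : List (Fin 4)) (a : Fin 4) : ‖travRev w a‖ = 1 := by
  obtain ⟨h₁, h₂⟩ : travRev w a ∈ {e : ℝ × ℝ | |e.1| = 1 ∧ |e.2| = 1} :=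
    range_travRev w ▸ Set.mem_range_self a
  rw [Prod.norm_def, Real.norm_eq_abs, Real.norm_eq_abs, h₁, h₂, max_self]

lemma exists_abs_sub_mul_le {y b : ℝ} (hy : |y| ≤ 2 * b) : ∃ e : ℝ, |e| = 1 ∧ |y - b * e| ≤ b := by
  rcases le_total 0 y with hy0 | hy0
  · exact ⟨1, abs_one, abs_le.2 ⟨by linarith [abs_le.1 hy], by linarith [abs_le.1 hy]⟩⟩
  · exact ⟨-1, by norm_num, abs_le.2 ⟨by linarith [abs_le.1 hy], by linarith [abs_le.1 hy]⟩⟩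

lemma exists_norm_sub_smul_travRev_le (w : List (Fin 4)) {Y : ℝ × ℝ} {b : ℝ} (hY : ‖Y‖ ≤ 2 * b) :
    ∃ a : Fin 4, ‖Y - b • travRev w a‖ ≤ b := by
  obtain ⟨hY₁, hY₂⟩ := norm_prod_le_iff.1 hY
  obtain ⟨e₁, he₁, h₁⟩ := exists_abs_sub_mul_le (y := Y.1) hY₁
  obtain ⟨e₂, he₂, h₂⟩ := exists_abs_sub_mul_le (y := Y.2) hY₂
  obtain ⟨a, ha⟩ : (e₁, e₂) ∈ Set.range (travRev w) := by
    rw [range_travRev]; exact ⟨he₁, he₂⟩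
  exact ⟨a, norm_prod_le_iff.2 ⟨by simpa [ha] using h₁, by simpa [ha] using h₂⟩⟩

/-- Words are stored reversed, newest digit first, as in `travRev`. -/
def prefixRev {β : Type*} (a : ℕ → β) (k : ℕ) : List β := (List.ofFn fun i : Fin k => a i).reverse

lemma prefixRev_succ {β : Type*} (a : ℕ → β) (k : ℕ) :
    prefixRev a (k + 1) = a k :: prefixRev a k := by
  simp only [prefixRev, List.ofFn_succ_last, List.reverse_append]
  rfl

@[simp] lemma length_prefixRev {β : Type*} (a : ℕ → β) (k : ℕ) : (prefixRev a k).length = k := by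
  simp [prefixRev]

lemma exists_seq_forall_prefixRev {β : Type*} {P : List β → Prop} {w₀ : List β} (h₀ : P w₀)
    (step : ∀ w, P w → ∃ b, P (b :: w)) :
    ∃ a : ℕ → β, ∀ k, w₀.length ≤ k → P (prefixRev a k) := by
  choose next hnext using step
  let W : ℕ → {w // P w} := fun n => Nat.rec ⟨w₀, h₀⟩ (fun _ w => ⟨_, hnext w.1 w.2⟩) n
  let a : ℕ → β := fun i => if h : i < w₀.length then w₀.reverse[i]'(by simpa using h)
    else next _ (W (i - w₀.length)).2
  have hW : ∀ n, prefixRev a (w₀.length + n) = (W n).1 := by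
    intro n
    induction n with
    | zero =>
      show (List.ofFn fun i : Fin w₀.length => a i).reverse = w₀
      rw [List.reverse_eq_iff]
      exact List.ext_getElem (by simp) fun i _ _ => by simp [a]
    | succ n ih =>
      rw [← add_assoc, prefixRev_succ, ih]
      simp [a, W]
  refine ⟨a, fun k hk => ?_⟩
  obtain ⟨n, rfl⟩ := Nat.exists_eq_add_of_le hk
  exact hW n ▸ (W n).2

noncomputable def cantorPartial (ρ : ℝ) : List (Fin 4) → ℝ
  | [] => 0
  | b :: w => cantorPartial ρ w + (1 - ρ) / (3 * ρ) * ((b : ℝ) * ρ ^ (w.length + 1))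

section Cantor

variable {ρ : ℝ}

lemma cantorPartial_prefixRev (a : ℕ → Fin 4) (k : ℕ) :
    cantorPartial ρ (prefixRev a k) =
      (1 - ρ) / (3 * ρ) * ∑ n ∈ Finset.range k, (a n : ℝ) * ρ ^ (n + 1) := by
  induction k with
  | zero => simp [prefixRev, cantorPartial]
  | succ k ih =>
    rw [prefixRev_succ, cantorPartial, ih, length_prefixRev, Finset.sum_range_succ, mul_add]

lemma cantorDigit_mem_Icc (hρ0 : 0 < ρ) (hρ1 : ρ < 1) (b : Fin 4) (k : ℕ) :
    (1 - ρ) / (3 * ρ) * ((b : ℝ) * ρ ^ (k + 1)) ∈ Icc 0 ((1 - ρ) * ρ ^ k) := by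
  have hb : (b : ℝ) ≤ 3 := by exact_mod_cast Nat.le_of_lt_succ b.isLt
  have hc : 0 ≤ (1 - ρ) / (3 * ρ) := div_nonneg (by linarith) (by linarith)
  refine ⟨by positivity, ?_⟩
  calc (1 - ρ) / (3 * ρ) * ((b : ℝ) * ρ ^ (k + 1))
      ≤ (1 - ρ) / (3 * ρ) * (3 * ρ ^ (k + 1)) := by gcongr
    _ = (1 - ρ) * ρ ^ k := by field_simp; ring

lemma cantorPartial_mem_Icc (hρ0 : 0 < ρ) (hρ1 : ρ < 1) (w : List (Fin 4)) :
    cantorPartial ρ w ∈ Icc 0 (1 - ρ ^ w.length) := by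
  induction w with
  | nil => simp [cantorPartial]
  | cons b w ih =>
    obtain ⟨hd₀, hd₁⟩ := cantorDigit_mem_Icc hρ0 hρ1 b w.length
    exact ⟨by rw [cantorPartial]; linarith [ih.1],
      by rw [cantorPartial, List.length_cons]; linarith [ih.2, pow_succ ρ w.length]⟩

lemma summable_cantor (hρ0 : 0 < ρ) (hρ1 : ρ < 1) (a : ℕ → Fin 4) :
    Summable fun n => (a n : ℝ) * ρ ^ (n + 1) := by
  refine .of_nonneg_of_le (fun n => by positivity) (fun n => ?_)
    ((summable_geometric_of_lt_one hρ0.le hρ1).mul_left (3 * ρ))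
  have hb : (a n : ℝ) ≤ 3 := by exact_mod_cast Nat.le_of_lt_succ (a n).isLt
  calc (a n : ℝ) * ρ ^ (n + 1) ≤ 3 * ρ ^ (n + 1) := by gcongr
    _ = 3 * ρ * ρ ^ n := by ring

lemma tendsto_cantorPartial_prefixRev (hρ0 : 0 < ρ) (hρ1 : ρ < 1) (a : ℕ → Fin 4) :
    Tendsto (fun k => cantorPartial ρ (prefixRev a k)) atTop (𝓝 (cantorPt ρ a)) := by
  simp only [cantorPartial_prefixRev]
  exact ((summable_cantor hρ0 hρ1 a).hasSum.tendsto_sum_nat).const_mul _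

lemma cantorPt_mem_Icc (hρ0 : 0 < ρ) (hρ1 : ρ < 1) (a : ℕ → Fin 4) : cantorPt ρ a ∈ Icc 0 1 :=
  isClosed_Icc.mem_of_tendsto (tendsto_cantorPartial_prefixRev hρ0 hρ1 a) <|
    .of_forall fun k => Icc_subset_Icc le_rfl (by linarith [pow_pos hρ0 (prefixRev a k).length])
      (cantorPartial_mem_Icc hρ0 hρ1 _)

lemma cantorPt_eq_cantorPartial_add (hρ0 : 0 < ρ) (hρ1 : ρ < 1) (a : ℕ → Fin 4) (k : ℕ) :
    cantorPt ρ a = cantorPartial ρ (prefixRev a k) + ρ ^ k * cantorPt ρ (fun n => a (n + k)) := by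
  have htail : ∑' n, (a (n + k) : ℝ) * ρ ^ (n + k + 1) =
      ρ ^ k * ∑' n, (a (n + k) : ℝ) * ρ ^ (n + 1) := by
    rw [← tsum_mul_left]; congr 1 with n; ring
  rw [cantorPartial_prefixRev, cantorPt, cantorPt,
    ← (summable_cantor hρ0 hρ1 a).sum_add_tsum_nat_add k, htail]
  ring

lemma cantorPt_sub_cantorPartial_mem_Icc (hρ0 : 0 < ρ) (hρ1 : ρ < 1) (a : ℕ → Fin 4) (k : ℕ) :
    cantorPt ρ a - cantorPartial ρ (prefixRev a k) ∈ Icc 0 (ρ ^ k) := by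
  obtain ⟨h₀, h₁⟩ := cantorPt_mem_Icc hρ0 hρ1 fun n => a (n + k)
  rw [cantorPt_eq_cantorPartial_add hρ0 hρ1 a k, add_sub_cancel_left]
  exact ⟨by positivity, mul_le_of_le_one_right (by positivity) h₁⟩

end Cantor

noncomputable def hilbertPartial (α : ℝ) : List (Fin 4) → ℝ × ℝ
  | [] => (1 / 2, 1 / 2)
  | b :: w => hilbertPartial α w + (α ^ w.length / 4) • travRev w b

lemma hilbertPartial_prefixRev (α : ℝ) (a : ℕ → Fin 4) (k : ℕ) :
    hilbertPartial α (prefixRev a k) = (1 / 2, 1 / 2) +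
      ∑ j ∈ Finset.range k, (α ^ j / 4) • trav (List.ofFn fun i : Fin j => a i) (a j) := by
  induction k with
  | zero => simp [prefixRev, hilbertPartial]
  | succ k ih =>
    rw [prefixRev_succ, hilbertPartial, ih, length_prefixRev, Finset.sum_range_succ, add_assoc]
    rfl

lemma tendsto_hilbertPartial_prefixRev {α : ℝ} (hα0 : 0 ≤ α) (hα1 : α < 1) (a : ℕ → Fin 4) :
    Tendsto (fun k => hilbertPartial α (prefixRev a k)) atTop (𝓝 (GHlim α a)) := by
  have hsum : Summable fun j => (α ^ j / 4) • trav (List.ofFn fun i : Fin j => a i) (a j) := by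
    refine .of_norm_bounded ((summable_geometric_of_lt_one hα0 hα1).div_const 4) fun j => ?_
    rw [norm_smul, trav, norm_travRev, mul_one, Real.norm_of_nonneg (by positivity)]
  simp only [hilbertPartial_prefixRev]
  exact hsum.hasSum.tendsto_sum_nat.const_add _

lemma mul_log_one_div_le {s x : ℝ} (hs : 0 < s) (hsx : s ≤ x) (hx : x ≤ 1) :
    s * Real.log (1 / s) ≤ x * (Real.log (1 / x) + 1) := by
  have hx0 : 0 < x := hs.trans_le hsx
  have hL : 0 ≤ Real.log (1 / x) := Real.log_nonneg (by rw [le_div_iff₀ hx0]; linarith)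
  have hsplit : Real.log (1 / s) = Real.log (1 / x) + Real.log (x / s) := by
    rw [← Real.log_mul (by positivity) (by positivity)]; congr 1; field_simp
  have hxs : s * Real.log (x / s) ≤ x - s := by
    calc s * Real.log (x / s) ≤ s * (x / s - 1) :=
          mul_le_mul_of_nonneg_left (Real.log_le_sub_one_of_pos (by positivity)) hs.le
      _ = x - s := by field_simp
  rw [hsplit]
  nlinarith [mul_le_mul_of_nonneg_right hsx hL]

lemma eventually_norm_sub_le_of_sqrt_log_modulus {E : Type*} [SeminormedAddCommGroup E]
    {h : ℝ → E} {α ρ C s₀ ε : ℝ} (hα : 0 < α) (hρ0 : 0 < ρ) (hρ1 : ρ < 1) (hρα : ρ < α ^ 2)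
    (hs₀ : 0 < s₀) (hε : 0 < ε)
    (hmod : ∀ s : ℝ, 0 < s → s ≤ s₀ → ∀ t : ℝ, 0 ≤ t → t ≤ 1 - s →
      ‖h (t + s) - h t‖ ≤ C * Real.sqrt (s * Real.log (1 / s))) :
    ∀ᶠ k : ℕ in atTop, ∀ t t' : ℝ, 0 ≤ t → t ≤ t' → t' ≤ 1 → t' - t ≤ ρ ^ k →
      ‖h t' - h t‖ ≤ ε * α ^ k := by
  set q := ρ / α ^ 2
  set L := Real.log (1 / ρ)
  set C' := max C 0
  have hL : 0 ≤ L := Real.log_nonneg (by rw [le_div_iff₀ hρ0]; linarith)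
  have hC' : 0 ≤ C' := le_max_right C 0
  have hq0 : 0 ≤ q := by positivity
  have hq1 : q < 1 := (div_lt_one (by positivity)).2 hρα
  have hlim : Tendsto (fun k : ℕ => C' * Real.sqrt (q ^ k * (k * L + 1))) atTop (𝓝 0) := by
    have h₁ : Tendsto (fun k : ℕ => L * (k * q ^ k) + q ^ k) atTop (𝓝 (L * 0 + 0)) :=
      ((tendsto_self_mul_const_pow_of_lt_one hq0 hq1).const_mul L).add
        (tendsto_pow_atTop_nhds_zero_of_lt_one hq0 hq1)
    have h₂ := ((Real.continuous_sqrt.tendsto _).comp h₁).const_mul C'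
    rw [mul_zero, add_zero, Real.sqrt_zero, mul_zero] at h₂
    refine h₂.congr fun k => ?_
    rw [Function.comp_apply]
    congr 2
    ring
  filter_upwards [hlim.eventually (ge_mem_nhds hε),
    (tendsto_pow_atTop_nhds_zero_of_lt_one hρ0.le hρ1).eventually (ge_mem_nhds hs₀)]
    with k hkε hks₀ t t' ht htt' ht' hk
  rcases htt'.eq_or_lt with rfl | hlt
  · simp only [sub_self, norm_zero]; positivity
  set s := t' - t
  have hρk : ρ ^ k * (Real.log (1 / ρ ^ k) + 1) = (α ^ k) ^ 2 * (q ^ k * (k * L + 1)) := by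
    have hlog : Real.log (1 / ρ ^ k) = k * L := by rw [← one_div_pow, Real.log_pow]
    rw [hlog, div_pow, ← pow_mul]
    field_simp
    ring
  calc ‖h t' - h t‖ = ‖h (t + s) - h t‖ := by rw [add_sub_cancel]
    _ ≤ C * Real.sqrt (s * Real.log (1 / s)) :=
        hmod s (sub_pos.2 hlt) (hk.trans hks₀) t ht (by linarith)
    _ ≤ C' * Real.sqrt (ρ ^ k * (Real.log (1 / ρ ^ k) + 1)) := by
        gcongr ?_ * Real.sqrt ?_
        · exact le_max_left _ _
        · exact mul_log_one_div_le (sub_pos.2 hlt) hk (pow_le_one₀ hρ0.le hρ1.le)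
    _ = α ^ k * (C' * Real.sqrt (q ^ k * (k * L + 1))) := by
        rw [hρk, Real.sqrt_mul' _ (mul_nonneg (pow_nonneg hq0 k) (by positivity)),
          Real.sqrt_sq (by positivity)]
        ring
    _ ≤ α ^ k * ε := by gcongr
    _ = ε * α ^ k := mul_comm _ _

noncomputable def hilbertResidual (α ρ : ℝ) (h : ℝ → ℝ × ℝ) (p : ℝ × ℝ) (w : List (Fin 4)) :
    ℝ × ℝ :=
  p - h (cantorPartial ρ w) - hilbertPartial α w

section Greedy

variable {α ρ : ℝ} {h : ℝ → ℝ × ℝ} {p : ℝ × ℝ}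

lemma exists_norm_hilbertResidual_cons_le (hρ0 : 0 < ρ) (hρ1 : ρ < 1) (w : List (Fin 4))
    (hosc : ∀ t t' : ℝ, 0 ≤ t → t ≤ t' → t' ≤ 1 → t' - t ≤ ρ ^ w.length →
      ‖h t' - h t‖ ≤ (2 * α - 1) / 4 * α ^ w.length)
    (hw : ‖hilbertResidual α ρ h p w‖ ≤ α ^ w.length / 2) :
    ∃ b, ‖hilbertResidual α ρ h p (b :: w)‖ ≤ α ^ (w.length + 1) / 2 := by
  set k := w.length
  obtain ⟨b, hb⟩ := exists_norm_sub_smul_travRev_le w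
    (Y := hilbertResidual α ρ h p w) (b := α ^ k / 4) (by linarith)
  refine ⟨b, ?_⟩
  obtain ⟨hd₀, hd₁⟩ := cantorDigit_mem_Icc hρ0 hρ1 b k
  have hτ := cantorPartial_mem_Icc hρ0 hρ1 w
  have hτ' := cantorPartial_mem_Icc hρ0 hρ1 (b :: w)
  have hstep : cantorPartial ρ (b :: w) - cantorPartial ρ w ≤ ρ ^ k := by
    rw [cantorPartial, add_sub_cancel_left]
    nlinarith [pow_pos hρ0 k]
  have hh := hosc _ _ hτ.1 (by rw [cantorPartial]; linarith)
    (by linarith [hτ'.2, pow_pos hρ0 (b :: w).length]) hstep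
  have hsplit : hilbertResidual α ρ h p (b :: w) =
      (hilbertResidual α ρ h p w - (α ^ k / 4) • travRev w b) -
        (h (cantorPartial ρ (b :: w)) - h (cantorPartial ρ w)) := by
    simp only [hilbertResidual, hilbertPartial]
    abel
  calc ‖hilbertResidual α ρ h p (b :: w)‖
      ≤ ‖hilbertResidual α ρ h p w - (α ^ k / 4) • travRev w b‖ +
          ‖h (cantorPartial ρ (b :: w)) - h (cantorPartial ρ w)‖ := hsplit ▸ norm_sub_le _ _
    _ ≤ α ^ k / 4 + (2 * α - 1) / 4 * α ^ k := add_le_add hb hh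
    _ = α ^ (k + 1) / 2 := by ring

lemma exists_seq_norm_hilbertResidual_le (hρ0 : 0 < ρ) (hρ1 : ρ < 1) {w₀ : List (Fin 4)}
    (hosc : ∀ k, w₀.length ≤ k → ∀ t t' : ℝ, 0 ≤ t → t ≤ t' → t' ≤ 1 → t' - t ≤ ρ ^ k →
      ‖h t' - h t‖ ≤ (2 * α - 1) / 4 * α ^ k)
    (hw₀ : ‖hilbertResidual α ρ h p w₀‖ ≤ α ^ w₀.length / 2) :
    ∃ a : ℕ → Fin 4, ∀ k, w₀.length ≤ k →
      ‖hilbertResidual α ρ h p (prefixRev a k)‖ ≤ α ^ k / 2 := by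
  obtain ⟨a, ha⟩ := exists_seq_forall_prefixRev
    (P := fun w => w₀.length ≤ w.length ∧ ‖hilbertResidual α ρ h p w‖ ≤ α ^ w.length / 2)
    ⟨le_rfl, hw₀⟩ fun w ⟨hlen, hw⟩ =>
      (exists_norm_hilbertResidual_cons_le hρ0 hρ1 w (hosc _ hlen) hw).imp
        fun _ hb => ⟨hlen.trans (Nat.le_succ _), hb⟩
  exact ⟨a, fun k hk => by simpa using (ha k hk).2⟩

lemma exists_GHlim_add_eq (hα0 : 0 < α) (hα1 : α < 1) (hρ0 : 0 < ρ) (hρ1 : ρ < 1)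
    {w₀ : List (Fin 4)}
    (hosc : ∀ k, w₀.length ≤ k → ∀ t t' : ℝ, 0 ≤ t → t ≤ t' → t' ≤ 1 → t' - t ≤ ρ ^ k →
      ‖h t' - h t‖ ≤ (2 * α - 1) / 4 * α ^ k)
    (hw₀ : ‖hilbertResidual α ρ h p w₀‖ ≤ α ^ w₀.length / 2) :
    ∃ a : ℕ → Fin 4, GHlim α a + h (cantorPt ρ a) = p := by
  obtain ⟨a, ha⟩ := exists_seq_norm_hilbertResidual_le hρ0 hρ1 hosc hw₀
  refine ⟨a, ?_⟩
  have hpow : Tendsto (fun k : ℕ => α ^ k) atTop (𝓝 0) :=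
    tendsto_pow_atTop_nhds_zero_of_lt_one hα0.le hα1
  have hh : Tendsto (fun k => h (cantorPartial ρ (prefixRev a k))) atTop
      (𝓝 (h (cantorPt ρ a))) := by
    refine tendsto_iff_norm_sub_tendsto_zero.2 <| squeeze_zero_norm' ?_
      (by simpa using hpow.const_mul ((2 * α - 1) / 4))
    filter_upwards [eventually_ge_atTop w₀.length] with k hk
    obtain ⟨h₀, h₁⟩ := cantorPt_sub_cantorPartial_mem_Icc hρ0 hρ1 a k
    rw [norm_norm, norm_sub_rev]
    exact hosc k hk _ _ (cantorPartial_mem_Icc hρ0 hρ1 _).1 (by linarith)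
      (cantorPt_mem_Icc hρ0 hρ1 a).2 h₁
  have hres : Tendsto (fun k => hilbertResidual α ρ h p (prefixRev a k)) atTop
      (𝓝 (p - h (cantorPt ρ a) - GHlim α a)) :=
    (tendsto_const_nhds.sub hh).sub (tendsto_hilbertPartial_prefixRev hα0.le hα1 a)
  have hres₀ : Tendsto (fun k => hilbertResidual α ρ h p (prefixRev a k)) atTop (𝓝 0) :=
    squeeze_zero_norm' (eventually_atTop.2 ⟨_, ha⟩) (by simpa using hpow.div_const 2)
  have := tendsto_nhds_unique hres hres₀
  rw [sub_sub, sub_eq_zero] at this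
  rw [this, add_comm]

end Greedy

theorem stmt15_general (α ρ : ℝ) (hα1 : 1 / 2 < α) (hα2 : α < 1) (hρ0 : 0 < ρ)
    (hρ1 : ρ < 1 / 4)
    (G : ℝ → ℝ × ℝ)
    (hGval : ∀ a : ℕ → Fin 4, G (cantorPt ρ a) = GHlim α a)
    (h : ℝ → ℝ × ℝ) (C : ℝ) (s0 : ℝ) (hs0 : 0 < s0)
    (hmod : ∀ s : ℝ, 0 < s → s ≤ s0 → ∀ t : ℝ, 0 ≤ t → t ≤ 1 - s →
      ‖h (t + s) - h t‖ ≤ C * Real.sqrt (s * Real.log (1 / s))) :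
    ∃ U : Set (ℝ × ℝ), IsOpen U ∧ U.Nonempty ∧
      U ⊆ (fun t => G t + h t) '' Icc (0:ℝ) 1 := by
  have hα0 : 0 < α := by linarith
  have hρ1' : ρ < 1 := by linarith
  obtain ⟨N, hN⟩ := eventually_atTop.1 <| eventually_norm_sub_le_of_sqrt_log_modulus hα0 hρ0 hρ1'
    (by nlinarith) hs0 (by linarith : 0 < (2 * α - 1) / 4) hmod
  set w₀ := List.replicate N (0 : Fin 4)
  refine ⟨Metric.ball (hilbertPartial α w₀ + h (cantorPartial ρ w₀)) (α ^ N / 2),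
    Metric.isOpen_ball, Metric.nonempty_ball.2 (by positivity), fun p hp => ?_⟩
  have hw₀ : ‖hilbertResidual α ρ h p w₀‖ ≤ α ^ w₀.length / 2 := by
    rw [hilbertResidual, sub_sub, add_comm (h _), ← dist_eq_norm, List.length_replicate]
    exact (Metric.mem_ball.1 hp).le
  obtain ⟨a, ha⟩ := exists_GHlim_add_eq hα0 hα2 hρ0 hρ1' (w₀ := w₀)
    (fun k hk => hN k (by simpa [w₀] using hk)) hw₀
  exact ⟨cantorPt ρ a, cantorPt_mem_Icc hρ0 hρ1' a, by simp only [hGval, ha]⟩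

/-- If `G` is the generalized planar Hilbert curve with `α > 1/2`, `ρ < 1/4`, and `h`
satisfies `|h(t+s) - h(t)| ≤ C√(s log(1/s))` for all sufficiently small `s > 0` and
`0 ≤ t ≤ 1 - s`, then the range of `G + h` contains a nonempty open set. -/
theorem stmt15 (α ρ : ℝ) (hα1 : 1 / 2 < α) (hα2 : α < 1) (hρ0 : 0 < ρ)
    (hρ1 : ρ < 1 / 4)
    (G : ℝ → ℝ × ℝ) (hGcont : ContinuousOn G (Icc 0 1))
    (hGval : ∀ a : ℕ → Fin 4, G (cantorPt ρ a) = GHlim α a)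
    (hGlin : ∀ s t : ℝ, 0 ≤ s → s < t → t ≤ 1 →
      Ioo s t ∩ Set.range (cantorPt ρ) = ∅ →
      ∀ u ∈ Icc s t, G u = G s + ((u - s) / (t - s)) • (G t - G s))
    (h : ℝ → ℝ × ℝ) (C : ℝ) (s0 : ℝ) (hs0 : 0 < s0)
    (hmod : ∀ s : ℝ, 0 < s → s ≤ s0 → ∀ t : ℝ, 0 ≤ t → t ≤ 1 - s →
      ‖h (t + s) - h t‖ ≤ C * Real.sqrt (s * Real.log (1 / s))) :
    ∃ U : Set (ℝ × ℝ), IsOpen U ∧ U.Nonempty ∧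
      U ⊆ (fun t => G t + h t) '' Icc (0:ℝ) 1 :=
  stmt15_general α ρ hα1 hα2 hρ0 hρ1 G hGval h C s0 hs0 hmod
end

section
/- For α > 1/2 and β = (2α−1)/4, there exists a set S of positive integers with Σ_{i∈S} α^i = 2β/(1−α). -/
/-!
Expand `T` greedily in powers of `α`: at step `n + 1` subtract `α ^ (n + 1)` from the remainder
whenever it fits. Since `α ≥ 1/2`, each power is at most the whole tail `∑_{i > n+1} α ^ i`, so the
remainder after step `n` stays in `[0, α ^ (n + 1) / (1 - α)]` and tends to `0`. The value
`2β / (1 - α) = (2α - 1) / (2 (1 - α))` lies in `[0, α / (1 - α)]`, the range of this invariant at `n = 0`.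
-/

open Filter Topology

noncomputable section

def greedyRemainder (α T : ℝ) : ℕ → ℝ
  | 0 => T
  | n + 1 =>
    if α ^ (n + 1) ≤ greedyRemainder α T n then greedyRemainder α T n - α ^ (n + 1)
    else greedyRemainder α T n

def greedyExponents (α T : ℝ) : Set ℕ :=
  {j | 1 ≤ j ∧ α ^ j ≤ greedyRemainder α T (j - 1)}

end

variable {α T : ℝ}

theorem greedyRemainder_sub_succ (n : ℕ) :
    greedyRemainder α T n - greedyRemainder α T (n + 1) =
      (greedyExponents α T).indicator (α ^ ·) (n + 1) := by
  by_cases h : α ^ (n + 1) ≤ greedyRemainder α T n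
  · have hmem : n + 1 ∈ greedyExponents α T := ⟨by omega, h⟩
    simp [greedyRemainder, h, Set.indicator_of_mem hmem]
  · have hmem : n + 1 ∉ greedyExponents α T := fun hn => h hn.2
    simp [greedyRemainder, h, Set.indicator_of_notMem hmem]

theorem sum_range_indicator_greedyExponents (n : ℕ) :
    ∑ j ∈ Finset.range (n + 1), (greedyExponents α T).indicator (α ^ ·) j =
      T - greedyRemainder α T n := by
  have h0 : 0 ∉ greedyExponents α T := fun h => by simpa using h.1
  rw [Finset.sum_range_succ', Set.indicator_of_notMem h0, add_zero]
  simp only [← greedyRemainder_sub_succ, Finset.sum_range_sub']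
  rfl

theorem greedyRemainder_mem_Icc (hα : 1 / 2 ≤ α) (hα1 : α < 1) (hT0 : 0 ≤ T)
    (hT : T ≤ α / (1 - α)) (n : ℕ) :
    greedyRemainder α T n ∈ Set.Icc 0 (α ^ (n + 1) / (1 - α)) := by
  have h1α : 0 < 1 - α := by linarith
  induction n with
  | zero => simpa [greedyRemainder] using ⟨hT0, hT⟩
  | succ n ih =>
    have htail : α ^ (n + 1) / (1 - α) - α ^ (n + 1) = α ^ (n + 2) / (1 - α) := by
      field_simp
      ring
    have hpow_le_tail : α ^ (n + 1) ≤ α ^ (n + 2) / (1 - α) := by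
      rw [le_div_iff₀ h1α, pow_succ α (n + 1)]
      have : 0 < α ^ (n + 1) := pow_pos (by linarith) _
      nlinarith
    obtain ⟨ih0, ih1⟩ := ih
    by_cases h : α ^ (n + 1) ≤ greedyRemainder α T n
    · simp only [greedyRemainder, if_pos h]
      constructor <;> linarith
    · simp only [greedyRemainder, if_neg h]
      exact ⟨ih0, by linarith⟩

theorem exists_set_hasSum_pow (hα : 1 / 2 ≤ α) (hα1 : α < 1) (hT0 : 0 ≤ T)
    (hT : T ≤ α / (1 - α)) :
    ∃ S : Set ℕ, (∀ i ∈ S, 1 ≤ i) ∧ HasSum (fun i : S => α ^ (i : ℕ)) T := by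
  have hbounds := greedyRemainder_mem_Icc hα hα1 hT0 hT
  have hbound_lim : Tendsto (fun n : ℕ => α ^ (n + 1) / (1 - α)) atTop (𝓝 0) := by
    simpa using ((tendsto_pow_atTop_nhds_zero_of_lt_one (by linarith) hα1).comp
      (tendsto_add_atTop_nat 1)).div_const (1 - α)
  have hrem_lim : Tendsto (greedyRemainder α T) atTop (𝓝 0) :=
    squeeze_zero (fun n => (hbounds n).1) (fun n => (hbounds n).2) hbound_lim
  refine ⟨greedyExponents α T, fun i hi => hi.1, ?_⟩
  rw [show (fun i : greedyExponents α T => α ^ (i : ℕ)) = (α ^ ·) ∘ (↑) from rfl,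
    hasSum_subtype_iff_indicator,
    hasSum_iff_tendsto_nat_of_nonneg (fun j => Set.indicator_nonneg
      (fun j _ => pow_nonneg (by linarith) j) j)]
  refine (tendsto_add_atTop_iff_nat 1).mp ?_
  simp only [sum_range_indicator_greedyExponents]
  simpa using tendsto_const_nhds.sub hrem_lim

/-- For `α > 1/2` and `β = (2α-1)/4`, there is a set `S` of positive integers with
`Σ_{i ∈ S} α^i = 2β/(1-α)`. -/
theorem stmt16 (α : ℝ) (hα1 : 1 / 2 < α) (hα2 : α < 1) (β : ℝ)
    (hβ : β = (2 * α - 1) / 4) :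
    ∃ S : Set ℕ, (∀ i ∈ S, 1 ≤ i) ∧
      HasSum (fun i : S => α ^ (i : ℕ)) (2 * β / (1 - α)) := by
  have h1α : 0 < 1 - α := by linarith
  subst hβ
  refine exists_set_hasSum_pow hα1.le hα2 (div_nonneg (by linarith) h1α.le) ?_
  exact div_le_div_of_nonneg_right (by linarith) h1α.le
end
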